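/- arXiv:2103.15778 — 2 statements merged into one kernel-verified Lean document; each statement's English description precedes it below -/
import Mathlib

section
/- For every rook circuit on an n × n' chessboard and every k with 1 ≤ k ≤ min(n, n'), the k × k subboard at any corner of the chessboard contains at least k turn-cells. -/
/-- The grid graph on an `n × m` board: vertices are cells `(row, column)`,
edges join orthogonally adjacent cells. -/
def gridGraph (n m : ℕ) : SimpleGraph (Fin n × Fin m) :=
  SimpleGraph.fromRel (fun a b =>
    (a.1 = b.1 ∧ (a.2 : ℕ) + 1 = (b.2 : ℕ)) ∨
    (a.2 = b.2 ∧ (a.1 : ℕ) + 1 = (b.1 : ℕ)))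

/-- An edge is horizontal if its endpoints lie in the same row. -/
def horizEdge {n m : ℕ} (e : Sym2 (Fin n × Fin m)) : Prop :=
  ∃ a b : Fin n × Fin m, e = s(a, b) ∧ a.1 = b.1

/-- An edge is vertical if its endpoints lie in the same column. -/
def vertEdge {n m : ℕ} (e : Sym2 (Fin n × Fin m)) : Prop :=
  ∃ a b : Fin n × Fin m, e = s(a, b) ∧ a.2 = b.2

/-- A cell is a turn-cell if it has an incident horizontal cycle edge and an
incident vertical cycle edge. -/
def IsTurnCell {n m : ℕ} {v₀ : Fin n × Fin m} (w : (gridGraph n m).Walk v₀ v₀)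
    (v : Fin n × Fin m) : Prop :=
  (∃ e ∈ w.edges, v ∈ e ∧ horizEdge e) ∧ (∃ e ∈ w.edges, v ∈ e ∧ vertEdge e)

/-- A cell is a straight-cell if all its incident cycle edges are horizontal,
or all are vertical. -/
def IsStraightCell {n m : ℕ} {v₀ : Fin n × Fin m} (w : (gridGraph n m).Walk v₀ v₀)
    (v : Fin n × Fin m) : Prop :=
  (∀ e ∈ w.edges, v ∈ e → horizEdge e) ∨ (∀ e ∈ w.edges, v ∈ e → vertEdge e)

open SimpleGraph

lemma horizEdge_mk {n m : ℕ} {a b : Fin n × Fin m} : horizEdge s(a,b) ↔ a.1 = b.1 := by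
  constructor
  · rintro ⟨c, d, he, h⟩
    rw [Sym2.eq_iff] at he
    rcases he with ⟨rfl, rfl⟩ | ⟨rfl, rfl⟩
    · exact h
    · exact h.symm
  · exact fun h => ⟨a, b, rfl, h⟩

lemma vertEdge_mk {n m : ℕ} {a b : Fin n × Fin m} : vertEdge s(a,b) ↔ a.2 = b.2 := by
  constructor
  · rintro ⟨c, d, he, h⟩
    rw [Sym2.eq_iff] at he
    rcases he with ⟨rfl, rfl⟩ | ⟨rfl, rfl⟩
    · exact h
    · exact h.symm
  · exact fun h => ⟨a, b, rfl, h⟩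

lemma grid_adj_cases {n m : ℕ} {a b : Fin n × Fin m} (h : (gridGraph n m).Adj a b) :
    (a.1 = b.1 ∧ ((a.2:ℕ)+1 = (b.2:ℕ) ∨ (b.2:ℕ)+1 = (a.2:ℕ))) ∨
    (a.2 = b.2 ∧ ((a.1:ℕ)+1 = (b.1:ℕ) ∨ (b.1:ℕ)+1 = (a.1:ℕ))) := by
  rw [gridGraph, SimpleGraph.fromRel_adj] at h
  rcases h with ⟨-, (⟨h1, h2⟩|⟨h1, h2⟩)|(⟨h1, h2⟩|⟨h1, h2⟩)⟩
  · exact Or.inl ⟨h1, Or.inl h2⟩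
  · exact Or.inr ⟨h1, Or.inl h2⟩
  · exact Or.inl ⟨h1.symm, Or.inr h2⟩
  · exact Or.inr ⟨h1.symm, Or.inr h2⟩

lemma grid_horiz_or_vert {n m : ℕ} {e : Sym2 (Fin n × Fin m)}
    (he : e ∈ (gridGraph n m).edgeSet) : horizEdge e ∨ vertEdge e := by
  induction e using Sym2.ind with
  | _ a b =>
    rcases grid_adj_cases ((SimpleGraph.mem_edgeSet _).1 he) with ⟨h, -⟩ | ⟨h, -⟩
    · exact Or.inl (horizEdge_mk.2 h)
    · exact Or.inr (vertEdge_mk.2 h)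

lemma grid_not_horiz_vert {n m : ℕ} {e : Sym2 (Fin n × Fin m)}
    (he : e ∈ (gridGraph n m).edgeSet) (h1 : horizEdge e) (h2 : vertEdge e) : False := by
  induction e using Sym2.ind with
  | _ a b =>
    exact ((SimpleGraph.mem_edgeSet _).1 he).ne
      (Prod.ext (horizEdge_mk.1 h1) (vertEdge_mk.1 h2))

lemma incident_edge {n m : ℕ} {e : Sym2 (Fin n × Fin m)} {v : Fin n × Fin m}
    (he : e ∈ (gridGraph n m).edgeSet) (hv : v ∈ e) :
    ∃ u, e = s(v, u) ∧ (gridGraph n m).Adj v u := by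
  induction e using Sym2.ind with
  | _ a b =>
    rcases Sym2.mem_iff.1 hv with rfl | rfl
    · exact ⟨b, rfl, (SimpleGraph.mem_edgeSet _).1 he⟩
    · exact ⟨a, Sym2.eq_swap, ((SimpleGraph.mem_edgeSet _).1 he).symm⟩

lemma two_incident {α : Type*} [DecidableEq α] {G : SimpleGraph α} {v₀ : α} {w : G.Walk v₀ v₀}
    (hw : w.IsHamiltonianCycle) (v : α) :
    ∃ e₁ e₂, e₁ ∈ w.edges ∧ e₂ ∈ w.edges ∧ e₁ ≠ e₂ ∧ v ∈ e₁ ∧ v ∈ e₂ := by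
  have hv : v ∈ w.support := hw.mem_support v
  have hc : (w.rotate v hv).IsCycle := hw.isCycle.rotate hv
  have hedges : ∀ e, e ∈ (w.rotate v hv).edges → e ∈ w.edges :=
    fun e h => (w.rotate_edges v hv).mem_iff.1 h
  obtain ⟨u, hadj, p, hp⟩ := SimpleGraph.Walk.not_nil_iff.1 hc.not_nil
  have hne : u ≠ v := hadj.ne'
  obtain ⟨x, hax, q, hqx⟩ :=
    SimpleGraph.Walk.not_nil_iff.1 (SimpleGraph.Walk.not_nil_of_ne hne.symm : ¬p.reverse.Nil)
  have he2p : s(v, x) ∈ p.edges := by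
    have : s(v, x) ∈ p.reverse.edges := by rw [hqx]; simp
    rwa [SimpleGraph.Walk.edges_reverse, List.mem_reverse] at this
  have hnodup : ((w.rotate v hv).edges).Nodup := hc.edges_nodup
  rw [hp, SimpleGraph.Walk.edges_cons] at hnodup
  refine ⟨s(v, u), s(v, x), hedges _ (by rw [hp]; simp), hedges _ (by rw [hp]; simp [he2p]),
    ?_, Sym2.mem_mk_left _ _, Sym2.mem_mk_left _ _⟩
  intro heq
  exact (List.nodup_cons.1 hnodup).1 (heq ▸ he2p)

lemma step_vert {n m : ℕ} {v₀ : Fin n × Fin m} {w : (gridGraph n m).Walk v₀ v₀}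
    (hw : w.IsHamiltonianCycle) (v : Fin n × Fin m)
    (hnt : ¬ IsTurnCell w v)
    (hleft : ∀ e ∈ w.edges, ∀ u : Fin n × Fin m, e = s(v, u) → u.1 = v.1 →
      (u.2 : ℕ) + 1 ≠ (v.2 : ℕ)) :
    ∀ e ∈ w.edges, v ∈ e → vertEdge e := by
  by_contra hcon
  push_neg at hcon
  obtain ⟨e₀, he₀, hv₀', hnv⟩ := hcon
  have hes : ∀ e ∈ w.edges, e ∈ (gridGraph n m).edgeSet := fun e he =>
    w.edges_subset_edgeSet he
  have he₀h : horizEdge e₀ := (grid_horiz_or_vert (hes _ he₀)).resolve_right hnv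
  -- all incident edges are horizontal
  have hallh : ∀ e ∈ w.edges, v ∈ e → horizEdge e := by
    intro e he hv
    rcases grid_horiz_or_vert (hes _ he) with h | h
    · exact h
    · exact absurd ⟨⟨e₀, he₀, hv₀', he₀h⟩, ⟨e, he, hv, h⟩⟩ hnt
  obtain ⟨e₁, e₂, he₁, he₂, hne, hv₁, hv₂⟩ := two_incident hw v
  -- each incident edge is the right edge
  have key : ∀ e ∈ w.edges, v ∈ e → ∀ u, e = s(v, u) →
      u.1 = v.1 ∧ (u.2 : ℕ) = (v.2 : ℕ) + 1 := by
    intro e he hv u hu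
    have hadj : (gridGraph n m).Adj v u := by
      have := hes _ he; rw [hu] at this; exact (SimpleGraph.mem_edgeSet _).1 this
    have hh : v.1 = u.1 := by
      have := hallh e he hv; rw [hu] at this; exact horizEdge_mk.1 this
    rcases grid_adj_cases hadj with ⟨-, hc | hc⟩ | ⟨-, hc | hc⟩
    · exact ⟨hh.symm, hc.symm⟩
    · exact absurd hc (hleft e he u hu hh.symm)
    · omega
    · omega
  obtain ⟨u₁, hu₁, -⟩ := incident_edge (hes _ he₁) hv₁
  obtain ⟨u₂, hu₂, -⟩ := incident_edge (hes _ he₂) hv₂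
  obtain ⟨k₁1, k₁2⟩ := key e₁ he₁ hv₁ u₁ hu₁
  obtain ⟨k₂1, k₂2⟩ := key e₂ he₂ hv₂ u₂ hu₂
  have : u₁ = u₂ := Prod.ext (k₁1.trans k₂1.symm) (Fin.ext (by omega))
  exact hne (by rw [hu₁, hu₂, this])

lemma step_horiz {n m : ℕ} {v₀ : Fin n × Fin m} {w : (gridGraph n m).Walk v₀ v₀}
    (hw : w.IsHamiltonianCycle) (v : Fin n × Fin m)
    (hnt : ¬ IsTurnCell w v)
    (hup : ∀ e ∈ w.edges, ∀ u : Fin n × Fin m, e = s(v, u) → u.2 = v.2 →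
      (u.1 : ℕ) + 1 ≠ (v.1 : ℕ)) :
    ∀ e ∈ w.edges, v ∈ e → horizEdge e := by
  by_contra hcon
  push_neg at hcon
  obtain ⟨e₀, he₀, hv₀', hnv⟩ := hcon
  have hes : ∀ e ∈ w.edges, e ∈ (gridGraph n m).edgeSet := fun e he =>
    w.edges_subset_edgeSet he
  have he₀h : vertEdge e₀ := (grid_horiz_or_vert (hes _ he₀)).resolve_left hnv
  have hallh : ∀ e ∈ w.edges, v ∈ e → vertEdge e := by
    intro e he hv
    rcases grid_horiz_or_vert (hes _ he) with h | h
    · exact absurd ⟨⟨e, he, hv, h⟩, ⟨e₀, he₀, hv₀', he₀h⟩⟩ hnt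
    · exact h
  obtain ⟨e₁, e₂, he₁, he₂, hne, hv₁, hv₂⟩ := two_incident hw v
  have key : ∀ e ∈ w.edges, v ∈ e → ∀ u, e = s(v, u) →
      u.2 = v.2 ∧ (u.1 : ℕ) = (v.1 : ℕ) + 1 := by
    intro e he hv u hu
    have hadj : (gridGraph n m).Adj v u := by
      have := hes _ he; rw [hu] at this; exact (SimpleGraph.mem_edgeSet _).1 this
    have hh : v.2 = u.2 := by
      have := hallh e he hv; rw [hu] at this; exact vertEdge_mk.1 this
    rcases grid_adj_cases hadj with ⟨-, hc | hc⟩ | ⟨-, hc | hc⟩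
    · omega
    · omega
    · exact ⟨hh.symm, hc.symm⟩
    · exact absurd hc (hup e he u hu hh.symm)
  obtain ⟨u₁, hu₁, -⟩ := incident_edge (hes _ he₁) hv₁
  obtain ⟨u₂, hu₂, -⟩ := incident_edge (hes _ he₂) hv₂
  obtain ⟨k₁1, k₁2⟩ := key e₁ he₁ hv₁ u₁ hu₁
  obtain ⟨k₂1, k₂2⟩ := key e₂ he₂ hv₂ u₂ hu₂
  have : u₁ = u₂ := Prod.ext (Fin.ext (by omega)) (k₁1.trans k₂1.symm)
  exact hne (by rw [hu₁, hu₂, this])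

lemma hook_turn {n m : ℕ} {v₀ : Fin n × Fin m} {w : (gridGraph n m).Walk v₀ v₀}
    (hw : w.IsHamiltonianCycle) (i : ℕ) (hin : i < n) (him : i < m) :
    ∃ v : Fin n × Fin m, max (v.1 : ℕ) (v.2 : ℕ) = i ∧ IsTurnCell w v := by
  by_contra hcon
  push_neg at hcon
  have hno : ∀ v : Fin n × Fin m, max (v.1 : ℕ) (v.2 : ℕ) = i → ¬ IsTurnCell w v :=
    fun v hv ht => hcon v hv ht
  have hes : ∀ e ∈ w.edges, e ∈ (gridGraph n m).edgeSet := fun e he =>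
    w.edges_subset_edgeSet he
  have vert : ∀ j : ℕ, (hj : j ≤ i) → ∀ e ∈ w.edges,
      ((⟨i, hin⟩, ⟨j, lt_of_le_of_lt hj him⟩) : Fin n × Fin m) ∈ e → vertEdge e := by
    intro j
    induction j with
    | zero =>
      intro hj
      apply step_vert hw _ (hno _ (by simp))
      intro e he u hu h1 h2
      simp at h2
    | succ j ih =>
      intro hj
      apply step_vert hw _ (hno _ (by simp; omega))
      intro e he u hu h1 h2
      have hu2 : (u.2 : ℕ) = j := by simpa using h2
      have hueq : u = ((⟨i, hin⟩, ⟨j, lt_of_le_of_lt (le_of_lt hj) him⟩) : Fin n × Fin m) :=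
        Prod.ext (by rw [h1]) (Fin.ext hu2)
      have hvmem : u ∈ e := by rw [hu]; exact Sym2.mem_mk_right _ _
      have hv : vertEdge e := by
        rw [hueq] at hvmem
        exact ih (le_of_lt hj) e he hvmem
      have hh : horizEdge e := by rw [hu]; exact horizEdge_mk.2 h1.symm
      exact grid_not_horiz_vert (hes _ he) hh hv
  have horiz : ∀ j : ℕ, (hj : j ≤ i) → ∀ e ∈ w.edges,
      ((⟨j, lt_of_le_of_lt hj hin⟩, ⟨i, him⟩) : Fin n × Fin m) ∈ e → horizEdge e := by
    intro j
    induction j with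
    | zero =>
      intro hj
      apply step_horiz hw _ (hno _ (by simp))
      intro e he u hu h1 h2
      simp at h2
    | succ j ih =>
      intro hj
      apply step_horiz hw _ (hno _ (by simp; omega))
      intro e he u hu h1 h2
      have hu1 : (u.1 : ℕ) = j := by simpa using h2
      have hueq : u = ((⟨j, lt_of_le_of_lt (le_of_lt hj) hin⟩, ⟨i, him⟩) : Fin n × Fin m) :=
        Prod.ext (Fin.ext hu1) (by rw [h1])
      have hvmem : u ∈ e := by rw [hu]; exact Sym2.mem_mk_right _ _
      have hv : horizEdge e := by
        rw [hueq] at hvmem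
        exact ih (le_of_lt hj) e he hvmem
      have hh : vertEdge e := by rw [hu]; exact vertEdge_mk.2 h1.symm
      exact grid_not_horiz_vert (hes _ he) hv hh
  obtain ⟨e₁, e₂, he₁, he₂, hne, hv₁, hv₂⟩ := two_incident hw ((⟨i, hin⟩, ⟨i, him⟩) : Fin n × Fin m)
  exact grid_not_horiz_vert (hes _ he₁) (horiz i le_rfl e₁ he₁ hv₁) (vert i le_rfl e₁ he₁ hv₁)

lemma topleft_turns {n m : ℕ} (k : ℕ) (hkn : k ≤ n) (hkm : k ≤ m)
    {v₀ : Fin n × Fin m} {w : (gridGraph n m).Walk v₀ v₀}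
    (hw : w.IsHamiltonianCycle) :
    k ≤ {v : Fin n × Fin m | (v.1 : ℕ) < k ∧ (v.2 : ℕ) < k ∧ IsTurnCell w v}.ncard := by
  set S := {v : Fin n × Fin m | (v.1 : ℕ) < k ∧ (v.2 : ℕ) < k ∧ IsTurnCell w v}
  choose t h1 h2 using fun i : Fin k =>
    hook_turn hw (i : ℕ) (lt_of_lt_of_le i.2 hkn) (lt_of_lt_of_le i.2 hkm)
  have hmem : ∀ i, t i ∈ S := by
    intro i
    refine ⟨?_, ?_, h2 i⟩
    · have := h1 i; omega
    · have := h1 i; omega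
  have hinj : Function.Injective (fun i : Fin k => (⟨t i, hmem i⟩ : S)) := by
    intro i j hij
    have : t i = t j := congrArg Subtype.val hij
    exact Fin.ext (by rw [← h1 i, ← h1 j, this])
  calc k = Nat.card (Fin k) := by simp
    _ ≤ Nat.card S := Nat.card_le_card_of_injective _ hinj
    _ = S.ncard := (Nat.card_coe_set_eq S)

lemma grid_adj_iff {n m : ℕ} {a b : Fin n × Fin m} : (gridGraph n m).Adj a b ↔
    (((a.1:ℕ) = (b.1:ℕ)) ∧ ((a.2:ℕ)+1 = (b.2:ℕ) ∨ (b.2:ℕ)+1 = (a.2:ℕ))) ∨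
    (((a.2:ℕ) = (b.2:ℕ)) ∧ ((a.1:ℕ)+1 = (b.1:ℕ) ∨ (b.1:ℕ)+1 = (a.1:ℕ))) := by
  constructor
  · intro h
    rcases grid_adj_cases h with ⟨h1, h2⟩ | ⟨h1, h2⟩
    · exact Or.inl ⟨congrArg Fin.val h1, h2⟩
    · exact Or.inr ⟨congrArg Fin.val h1, h2⟩
  · intro h
    rw [gridGraph, SimpleGraph.fromRel_adj]
    constructor
    · intro he
      rw [he] at h
      omega
    · rcases h with ⟨h1, h2 | h2⟩ | ⟨h1, h2 | h2⟩
      · exact Or.inl (Or.inl ⟨Fin.ext h1, h2⟩)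
      · exact Or.inr (Or.inl ⟨Fin.ext h1.symm, h2⟩)
      · exact Or.inl (Or.inr ⟨Fin.ext h1, h2⟩)
      · exact Or.inr (Or.inr ⟨Fin.ext h1.symm, h2⟩)

def rowFlipIso (n m : ℕ) : gridGraph n m ≃g gridGraph n m where
  toEquiv := Equiv.prodCongr Fin.revPerm (Equiv.refl _)
  map_rel_iff' := by
    intro a b
    simp only [Equiv.prodCongr_apply, Equiv.coe_refl, Prod.map, Fin.revPerm_apply, id]
    rw [grid_adj_iff, grid_adj_iff]
    have h1 := a.1.isLt; have h2 := b.1.isLt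
    simp only [Fin.val_rev]
    omega

def colFlipIso (n m : ℕ) : gridGraph n m ≃g gridGraph n m where
  toEquiv := Equiv.prodCongr (Equiv.refl _) Fin.revPerm
  map_rel_iff' := by
    intro a b
    simp only [Equiv.prodCongr_apply, Equiv.coe_refl, Prod.map, Fin.revPerm_apply, id]
    rw [grid_adj_iff, grid_adj_iff]
    have h1 := a.2.isLt; have h2 := b.2.isLt
    simp only [Fin.val_rev]
    omega

def bothFlipIso (n m : ℕ) : gridGraph n m ≃g gridGraph n m where
  toEquiv := Equiv.prodCongr Fin.revPerm Fin.revPerm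
  map_rel_iff' := by
    intro a b
    simp only [Equiv.prodCongr_apply, Prod.map, Fin.revPerm_apply]
    rw [grid_adj_iff, grid_adj_iff]
    have h1 := a.1.isLt; have h2 := b.1.isLt
    have h3 := a.2.isLt; have h4 := b.2.isLt
    simp only [Fin.val_rev]
    omega

lemma isTurnCell_map {n m : ℕ} {v₀ : Fin n × Fin m} {w : (gridGraph n m).Walk v₀ v₀}
    (f : gridGraph n m ≃g gridGraph n m)
    (hrow : ∀ a b : Fin n × Fin m, (f a).1 = (f b).1 ↔ a.1 = b.1)
    (hcol : ∀ a b : Fin n × Fin m, (f a).2 = (f b).2 ↔ a.2 = b.2)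
    (v : Fin n × Fin m) :
    IsTurnCell (w.map f.toHom) (f v) ↔ IsTurnCell w v := by
  have hinj : Function.Injective f := f.toEquiv.injective
  have hmem : ∀ (e : Sym2 (Fin n × Fin m)), f v ∈ Sym2.map (⇑f) e ↔ v ∈ e := by
    intro e
    rw [Sym2.mem_map]
    constructor
    · rintro ⟨a, ha, hfa⟩; rwa [← hinj hfa]
    · exact fun h => ⟨v, h, rfl⟩
  have hhor : ∀ (e : Sym2 (Fin n × Fin m)), horizEdge (Sym2.map (⇑f) e) ↔ horizEdge e := by
    intro e
    induction e using Sym2.ind with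
    | _ a b => rw [Sym2.map_pair_eq, horizEdge_mk, horizEdge_mk, hrow]
  have hver : ∀ (e : Sym2 (Fin n × Fin m)), vertEdge (Sym2.map (⇑f) e) ↔ vertEdge e := by
    intro e
    induction e using Sym2.ind with
    | _ a b => rw [Sym2.map_pair_eq, vertEdge_mk, vertEdge_mk, hcol]
  unfold IsTurnCell
  rw [SimpleGraph.Walk.edges_map]
  constructor
  · rintro ⟨⟨e, he, hv, hh⟩, ⟨e', he', hv', hh'⟩⟩
    obtain ⟨a, ha, rfl⟩ := List.mem_map.1 he
    obtain ⟨a', ha', rfl⟩ := List.mem_map.1 he'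
    exact ⟨⟨a, ha, (hmem a).1 hv, (hhor a).1 hh⟩, ⟨a', ha', (hmem a').1 hv', (hver a').1 hh'⟩⟩
  · rintro ⟨⟨e, he, hv, hh⟩, ⟨e', he', hv', hh'⟩⟩
    exact ⟨⟨Sym2.map (⇑f) e, List.mem_map_of_mem he, (hmem e).2 hv, (hhor e).2 hh⟩,
      ⟨Sym2.map (⇑f) e', List.mem_map_of_mem he', (hmem e').2 hv', (hver e').2 hh'⟩⟩

lemma corner_le {n m k : ℕ} (hkn : k ≤ n) (hkm : k ≤ m)
    {v₀ : Fin n × Fin m} {w : (gridGraph n m).Walk v₀ v₀} (hw : w.IsHamiltonianCycle)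
    (f : gridGraph n m ≃g gridGraph n m)
    (hrow : ∀ a b : Fin n × Fin m, (f a).1 = (f b).1 ↔ a.1 = b.1)
    (hcol : ∀ a b : Fin n × Fin m, (f a).2 = (f b).2 ↔ a.2 = b.2)
    (S : Set (Fin n × Fin m))
    (hmem : ∀ v, v ∈ S ↔ (((f v).1 : ℕ) < k ∧ ((f v).2 : ℕ) < k ∧ IsTurnCell w v)) :
    k ≤ S.ncard := by
  have hw' : (w.map f.toHom).IsHamiltonianCycle := hw.map (f := f.toHom) f.toEquiv.bijective
  set T := {v : Fin n × Fin m | (v.1 : ℕ) < k ∧ (v.2 : ℕ) < k ∧ IsTurnCell (w.map f.toHom) v}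
    with hT
  have hST : S = ⇑f ⁻¹' T := by
    ext v
    rw [hmem, Set.mem_preimage, hT, Set.mem_setOf_eq, isTurnCell_map f hrow hcol v]
  have himg : ⇑f '' S = T := by
    rw [hST, Set.image_preimage_eq _ f.surjective]
  calc k ≤ T.ncard := topleft_turns k hkn hkm hw'
    _ = (⇑f '' S).ncard := by rw [himg]
    _ = S.ncard := Set.ncard_image_of_injective S f.injective

/-- In any rook circuit on an `n × n'` board, each `k × k` corner subboard
(top-left, top-right, bottom-left, bottom-right) contains at least `k`
turn-cells, for every `1 ≤ k ≤ min n n'`. -/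
theorem corner_turns (n n' : ℕ) (k : ℕ) (hk1 : 1 ≤ k) (hk2 : k ≤ min n n')
    (v₀ : Fin n × Fin n') (w : (gridGraph n n').Walk v₀ v₀)
    (hw : w.IsHamiltonianCycle) :
    k ≤ {v : Fin n × Fin n' | (v.1 : ℕ) < k ∧ (v.2 : ℕ) < k ∧
          IsTurnCell w v}.ncard ∧
    k ≤ {v : Fin n × Fin n' | (v.1 : ℕ) < k ∧ n' - k ≤ (v.2 : ℕ) ∧
          IsTurnCell w v}.ncard ∧
    k ≤ {v : Fin n × Fin n' | n - k ≤ (v.1 : ℕ) ∧ (v.2 : ℕ) < k ∧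
          IsTurnCell w v}.ncard ∧
    k ≤ {v : Fin n × Fin n' | n - k ≤ (v.1 : ℕ) ∧ n' - k ≤ (v.2 : ℕ) ∧
          IsTurnCell w v}.ncard := by
  have hkn : k ≤ n := hk2.trans (min_le_left _ _)
  have hkm : k ≤ n' := hk2.trans (min_le_right _ _)
  refine ⟨topleft_turns k hkn hkm hw, ?_, ?_, ?_⟩
  · refine corner_le hkn hkm hw (colFlipIso n n')
      (fun a b => Iff.rfl) (fun a b => Fin.rev_inj) _ (fun v => ?_)
    have hb := v.2.isLt
    show ((v.1 : ℕ) < k ∧ n' - k ≤ (v.2 : ℕ) ∧ IsTurnCell w v) ↔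
      ((v.1 : ℕ) < k ∧ ((v.2.rev : ℕ)) < k ∧ IsTurnCell w v)
    rw [Fin.val_rev]
    constructor <;> rintro ⟨h1, h2, h3⟩ <;> exact ⟨h1, by omega, h3⟩
  · refine corner_le hkn hkm hw (rowFlipIso n n')
      (fun a b => Fin.rev_inj) (fun a b => Iff.rfl) _ (fun v => ?_)
    have hb := v.1.isLt
    show (n - k ≤ (v.1 : ℕ) ∧ (v.2 : ℕ) < k ∧ IsTurnCell w v) ↔
      (((v.1.rev : ℕ)) < k ∧ (v.2 : ℕ) < k ∧ IsTurnCell w v)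
    rw [Fin.val_rev]
    constructor <;> rintro ⟨h1, h2, h3⟩ <;> exact ⟨by omega, h2, h3⟩
  · refine corner_le hkn hkm hw (bothFlipIso n n')
      (fun a b => Fin.rev_inj) (fun a b => Fin.rev_inj) _ (fun v => ?_)
    have hb := v.1.isLt
    have hb2 := v.2.isLt
    show (n - k ≤ (v.1 : ℕ) ∧ n' - k ≤ (v.2 : ℕ) ∧ IsTurnCell w v) ↔
      (((v.1.rev : ℕ)) < k ∧ ((v.2.rev : ℕ)) < k ∧ IsTurnCell w v)
    rw [Fin.val_rev, Fin.val_rev]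
    constructor <;> rintro ⟨h1, h2, h3⟩ <;> exact ⟨by omega, by omega, h3⟩
end

section
/- Let n < m with n·m even. Every rook circuit on an n × m chessboard has at least 2n turn-cells if n is even, and at least 2m turn-cells if n is odd. -/
open SimpleGraph

namespace RookAux

-- generic helper: in a path, any edge containing the start vertex is the first edge
lemma path_head_edge {V : Type*} {G : SimpleGraph V} {a b : V} {q : G.Walk a b}
    (hq : q.IsPath) {e : Sym2 V} (he : e ∈ q.edges) (ha : a ∈ e) :
    e = s(a, q.getVert 1) := by
  cases q with
  | nil => simp at he
  | @cons _ c _ h' q' =>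
    rw [SimpleGraph.Walk.edges_cons] at he
    rcases List.mem_cons.mp he with rfl | he'
    · simp
    · exfalso
      obtain ⟨u, rfl⟩ := Sym2.mem_iff_exists.mp ha
      have : a ∈ q'.support := SimpleGraph.Walk.fst_mem_support_of_mem_edges q' he'
      have hnd := hq.support_nodup
      rw [SimpleGraph.Walk.support_cons] at hnd
      exact (List.nodup_cons.mp hnd).1 this

lemma path_head_edge_mem {V : Type*} {G : SimpleGraph V} {a b : V} (q : G.Walk a b)
    (hab : a ≠ b) : s(a, q.getVert 1) ∈ q.edges := by
  cases q with
  | nil => exact absurd rfl hab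
  | @cons _ c _ h' q' => simp

lemma two_incident {V : Type*} [DecidableEq V] {G : SimpleGraph V} {v₀ : V} {w : G.Walk v₀ v₀}
    (hw : w.IsHamiltonianCycle) (v : V) :
    ∃ u₁ u₂ : V, u₁ ≠ u₂ ∧ s(v, u₁) ∈ w.edges ∧ s(v, u₂) ∈ w.edges ∧
      ∀ e ∈ w.edges, v ∈ e → e = s(v, u₁) ∨ e = s(v, u₂) := by
  have hv : v ∈ w.support := hw.mem_support v
  have hrot : ∀ e, e ∈ (w.rotate v hv).edges ↔ e ∈ w.edges :=
    fun e => (w.rotate_edges v hv).perm.mem_iff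
  have hc : (w.rotate v hv).IsCycle := hw.isCycle.rotate hv
  revert hc hrot
  generalize (w.rotate v hv) = c
  intro hrot hc
  cases c with
  | nil => exact absurd hc (SimpleGraph.Walk.IsCycle.not_of_nil)
  | @cons _ x _ h p =>
    rw [SimpleGraph.Walk.cons_isCycle_iff] at hc
    obtain ⟨hp, hne⟩ := hc
    have hvx : v ≠ x := h.ne
    have hqpath : p.reverse.IsPath := hp.reverse
    have hmemrev : ∀ e, e ∈ p.reverse.edges ↔ e ∈ p.edges := by
      intro e; rw [SimpleGraph.Walk.edges_reverse, List.mem_reverse]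
    have hu2mem : s(v, p.reverse.getVert 1) ∈ p.edges :=
      (hmemrev _).mp (path_head_edge_mem p.reverse hvx)
    refine ⟨x, p.reverse.getVert 1, ?_, ?_, ?_, ?_⟩
    · intro hxeq
      rw [← hxeq] at hu2mem
      exact hne hu2mem
    · rw [← hrot]; simp
    · rw [← hrot, SimpleGraph.Walk.edges_cons]
      exact List.mem_cons_of_mem _ hu2mem
    · intro e he hve
      rw [← hrot, SimpleGraph.Walk.edges_cons] at he
      rcases List.mem_cons.mp he with rfl | he'
      · exact Or.inl rfl
      · exact Or.inr (path_head_edge hqpath ((hmemrev e).mpr he') hve)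


variable {n m : ℕ} {v₀ : Fin n × Fin m} {w : (gridGraph n m).Walk v₀ v₀}

lemma grid_adj {a b : Fin n × Fin m} (h : (gridGraph n m).Adj a b) :
    (a.1 = b.1 ∧ ((a.2 : ℕ) + 1 = (b.2 : ℕ) ∨ (b.2 : ℕ) + 1 = (a.2 : ℕ))) ∨
    (a.2 = b.2 ∧ ((a.1 : ℕ) + 1 = (b.1 : ℕ) ∨ (b.1 : ℕ) + 1 = (a.1 : ℕ))) := by
  rw [gridGraph, SimpleGraph.fromRel_adj] at h
  obtain ⟨-, h⟩ := h
  rcases h with (⟨h1, h2⟩ | ⟨h1, h2⟩) | (⟨h1, h2⟩ | ⟨h1, h2⟩)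
  · exact Or.inl ⟨h1, Or.inl h2⟩
  · exact Or.inr ⟨h1, Or.inl h2⟩
  · exact Or.inl ⟨h1.symm, Or.inr h2⟩
  · exact Or.inr ⟨h1.symm, Or.inr h2⟩

lemma horiz_mk {a b : Fin n × Fin m} : horizEdge s(a, b) ↔ a.1 = b.1 := by
  constructor
  · rintro ⟨x, y, hxy, hrow⟩
    rw [Sym2.eq_iff] at hxy
    rcases hxy with ⟨rfl, rfl⟩ | ⟨rfl, rfl⟩
    · exact hrow
    · exact hrow.symm
  · exact fun h => ⟨a, b, rfl, h⟩

lemma vert_mk {a b : Fin n × Fin m} : vertEdge s(a, b) ↔ a.2 = b.2 := by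
  constructor
  · rintro ⟨x, y, hxy, hcol⟩
    rw [Sym2.eq_iff] at hxy
    rcases hxy with ⟨rfl, rfl⟩ | ⟨rfl, rfl⟩
    · exact hcol
    · exact hcol.symm
  · exact fun h => ⟨a, b, rfl, h⟩

lemma edge_between {e : Sym2 (Fin n × Fin m)} (he : e ∈ w.edges)
    {v : Fin n × Fin m} (hv : v ∈ e) :
    ∃ u, e = s(v, u) ∧ (gridGraph n m).Adj v u := by
  obtain ⟨u, rfl⟩ := Sym2.mem_iff_exists.mp hv
  exact ⟨u, rfl, (gridGraph n m).mem_edgeSet.mp (w.edges_subset_edgeSet he)⟩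

lemma not_both {e : Sym2 (Fin n × Fin m)} (he : e ∈ w.edges)
    (h1 : horizEdge e) (h2 : vertEdge e) : False := by
  obtain ⟨a, b, rfl, hrow⟩ := h1
  have hcol := vert_mk.mp h2
  have hadj := (gridGraph n m).mem_edgeSet.mp (w.edges_subset_edgeSet he)
  exact hadj.ne (Prod.ext hrow hcol)

lemma horiz_or_vert {e : Sym2 (Fin n × Fin m)} (he : e ∈ w.edges) :
    horizEdge e ∨ vertEdge e := by
  revert he
  induction e using Sym2.ind with
  | _ a b =>
    intro he
    have hadj := (gridGraph n m).mem_edgeSet.mp (w.edges_subset_edgeSet he)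
    rcases grid_adj hadj with ⟨h, -⟩ | ⟨h, -⟩
    · exact Or.inl (horiz_mk.mpr h)
    · exact Or.inr (vert_mk.mpr h)

lemma stepH (hw : w.IsHamiltonianCycle) {v : Fin n × Fin m}
    (hnt : ¬IsTurnCell w v) {e : Sym2 (Fin n × Fin m)} (he : e ∈ w.edges)
    (hv : v ∈ e) (hh : horizEdge e) :
    ∃ uL uR : Fin n × Fin m, s(v, uL) ∈ w.edges ∧ s(v, uR) ∈ w.edges ∧
      uL.1 = v.1 ∧ uR.1 = v.1 ∧ (uL.2 : ℕ) + 1 = (v.2 : ℕ) ∧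
      (v.2 : ℕ) + 1 = (uR.2 : ℕ) := by
  have hnv : ∀ e' ∈ w.edges, v ∈ e' → ¬vertEdge e' :=
    fun e' he' hve' hv' => hnt ⟨⟨e, he, hv, hh⟩, ⟨e', he', hve', hv'⟩⟩
  obtain ⟨u₁, u₂, hne, h1, h2, -⟩ := two_incident hw v
  have key : ∀ u : Fin n × Fin m, s(v, u) ∈ w.edges →
      u.1 = v.1 ∧ ((u.2 : ℕ) + 1 = (v.2 : ℕ) ∨ (v.2 : ℕ) + 1 = (u.2 : ℕ)) := by
    intro u hu
    have hadj := (gridGraph n m).mem_edgeSet.mp (w.edges_subset_edgeSet hu)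
    have hnv' : ¬(v.2 = u.2) := fun hc =>
      hnv _ hu (Sym2.mem_mk_left _ _) (vert_mk.mpr hc)
    rcases grid_adj hadj with ⟨hrow, hcols⟩ | ⟨hcol, -⟩
    · exact ⟨hrow.symm, by omega⟩
    · exact absurd hcol hnv'
  obtain ⟨ha1, hb1⟩ := key u₁ h1
  obtain ⟨ha2, hb2⟩ := key u₂ h2
  have hneuv : u₁ ≠ u₂ := hne
  rcases hb1 with hb1 | hb1 <;> rcases hb2 with hb2 | hb2
  · exact absurd (Prod.ext (ha1.trans ha2.symm) (Fin.ext (by omega))) hneuv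
  · exact ⟨u₁, u₂, h1, h2, ha1, ha2, hb1, hb2⟩
  · exact ⟨u₂, u₁, h2, h1, ha2, ha1, hb2, hb1⟩
  · exact absurd (Prod.ext (ha1.trans ha2.symm) (Fin.ext (by omega))) hneuv

lemma stepV (hw : w.IsHamiltonianCycle) {v : Fin n × Fin m}
    (hnt : ¬IsTurnCell w v) {e : Sym2 (Fin n × Fin m)} (he : e ∈ w.edges)
    (hv : v ∈ e) (hh : vertEdge e) :
    ∃ uU uD : Fin n × Fin m, s(v, uU) ∈ w.edges ∧ s(v, uD) ∈ w.edges ∧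
      uU.2 = v.2 ∧ uD.2 = v.2 ∧ (uU.1 : ℕ) + 1 = (v.1 : ℕ) ∧
      (v.1 : ℕ) + 1 = (uD.1 : ℕ) := by
  have hnv : ∀ e' ∈ w.edges, v ∈ e' → ¬horizEdge e' :=
    fun e' he' hve' hv' => hnt ⟨⟨e', he', hve', hv'⟩, ⟨e, he, hv, hh⟩⟩
  obtain ⟨u₁, u₂, hne, h1, h2, -⟩ := two_incident hw v
  have key : ∀ u : Fin n × Fin m, s(v, u) ∈ w.edges →
      u.2 = v.2 ∧ ((u.1 : ℕ) + 1 = (v.1 : ℕ) ∨ (v.1 : ℕ) + 1 = (u.1 : ℕ)) := by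
    intro u hu
    have hadj := (gridGraph n m).mem_edgeSet.mp (w.edges_subset_edgeSet hu)
    have hnv' : ¬(v.1 = u.1) := fun hc =>
      hnv _ hu (Sym2.mem_mk_left _ _) (horiz_mk.mpr hc)
    rcases grid_adj hadj with ⟨hrow, -⟩ | ⟨hcol, hrows⟩
    · exact absurd hrow hnv'
    · exact ⟨hcol.symm, by omega⟩
  obtain ⟨ha1, hb1⟩ := key u₁ h1
  obtain ⟨ha2, hb2⟩ := key u₂ h2
  have hneuv : u₁ ≠ u₂ := hne
  rcases hb1 with hb1 | hb1 <;> rcases hb2 with hb2 | hb2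
  · exact absurd (Prod.ext (Fin.ext (by omega)) (ha1.trans ha2.symm)) hneuv
  · exact ⟨u₁, u₂, h1, h2, ha1, ha2, hb1, hb2⟩
  · exact ⟨u₂, u₁, h2, h1, ha2, ha1, hb2, hb1⟩
  · exact absurd (Prod.ext (Fin.ext (by omega)) (ha1.trans ha2.symm)) hneuv

lemma propL (hw : w.IsHamiltonianCycle) :
    ∀ (k : ℕ) (v : Fin n × Fin m) (e : Sym2 (Fin n × Fin m)), (v.2 : ℕ) = k →
      (∀ u : Fin n × Fin m, u.1 = v.1 → (u.2 : ℕ) ≤ (v.2 : ℕ) → ¬IsTurnCell w u) →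
      e ∈ w.edges → v ∈ e → horizEdge e → False := by
  intro k
  induction k with
  | zero =>
    intro v e hk hall he hv hh
    obtain ⟨uL, uR, hLmem, hRmem, hLrow, hRrow, hLcol, hRcol⟩ :=
      stepH hw (hall v rfl le_rfl) he hv hh
    omega
  | succ k ih =>
    intro v e hk hall he hv hh
    obtain ⟨uL, uR, hLmem, hRmem, hLrow, hRrow, hLcol, hRcol⟩ :=
      stepH hw (hall v rfl le_rfl) he hv hh
    exact ih uL s(v, uL) (by omega)
      (fun u hu1 hu2 => hall u (hu1.trans hLrow) (by omega))
      hLmem (Sym2.mem_mk_right _ _) (horiz_mk.mpr hLrow.symm)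

lemma propR (hw : w.IsHamiltonianCycle) :
    ∀ (k : ℕ) (v : Fin n × Fin m) (e : Sym2 (Fin n × Fin m)), m - 1 - (v.2 : ℕ) = k →
      (∀ u : Fin n × Fin m, u.1 = v.1 → (v.2 : ℕ) ≤ (u.2 : ℕ) → ¬IsTurnCell w u) →
      e ∈ w.edges → v ∈ e → horizEdge e → False := by
  intro k
  induction k with
  | zero =>
    intro v e hk hall he hv hh
    obtain ⟨uL, uR, hLmem, hRmem, hLrow, hRrow, hLcol, hRcol⟩ :=
      stepH hw (hall v rfl le_rfl) he hv hh
    have h1 := uR.2.isLt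
    have h2 := v.2.isLt
    omega
  | succ k ih =>
    intro v e hk hall he hv hh
    obtain ⟨uL, uR, hLmem, hRmem, hLrow, hRrow, hLcol, hRcol⟩ :=
      stepH hw (hall v rfl le_rfl) he hv hh
    have h1 := uR.2.isLt
    exact ih uR s(v, uR) (by omega)
      (fun u hu1 hu2 => hall u (hu1.trans hRrow) (by omega))
      hRmem (Sym2.mem_mk_right _ _) (horiz_mk.mpr hRrow.symm)

lemma propU (hw : w.IsHamiltonianCycle) :
    ∀ (k : ℕ) (v : Fin n × Fin m) (e : Sym2 (Fin n × Fin m)), (v.1 : ℕ) = k →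
      (∀ u : Fin n × Fin m, u.2 = v.2 → (u.1 : ℕ) ≤ (v.1 : ℕ) → ¬IsTurnCell w u) →
      e ∈ w.edges → v ∈ e → vertEdge e → False := by
  intro k
  induction k with
  | zero =>
    intro v e hk hall he hv hh
    obtain ⟨uU, uD, hUmem, hDmem, hUcol, hDcol, hUrow, hDrow⟩ :=
      stepV hw (hall v rfl le_rfl) he hv hh
    omega
  | succ k ih =>
    intro v e hk hall he hv hh
    obtain ⟨uU, uD, hUmem, hDmem, hUcol, hDcol, hUrow, hDrow⟩ :=
      stepV hw (hall v rfl le_rfl) he hv hh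
    exact ih uU s(v, uU) (by omega)
      (fun u hu1 hu2 => hall u (hu1.trans hUcol) (by omega))
      hUmem (Sym2.mem_mk_right _ _) (vert_mk.mpr hUcol.symm)

lemma propD (hw : w.IsHamiltonianCycle) :
    ∀ (k : ℕ) (v : Fin n × Fin m) (e : Sym2 (Fin n × Fin m)), n - 1 - (v.1 : ℕ) = k →
      (∀ u : Fin n × Fin m, u.2 = v.2 → (v.1 : ℕ) ≤ (u.1 : ℕ) → ¬IsTurnCell w u) →
      e ∈ w.edges → v ∈ e → vertEdge e → False := by
  intro k
  induction k with
  | zero =>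
    intro v e hk hall he hv hh
    obtain ⟨uU, uD, hUmem, hDmem, hUcol, hDcol, hUrow, hDrow⟩ :=
      stepV hw (hall v rfl le_rfl) he hv hh
    have h1 := uD.1.isLt
    have h2 := v.1.isLt
    omega
  | succ k ih =>
    intro v e hk hall he hv hh
    obtain ⟨uU, uD, hUmem, hDmem, hUcol, hDcol, hUrow, hDrow⟩ :=
      stepV hw (hall v rfl le_rfl) he hv hh
    have h1 := uD.1.isLt
    exact ih uD s(v, uD) (by omega)
      (fun u hu1 hu2 => hall u (hu1.trans hDcol) (by omega))
      hDmem (Sym2.mem_mk_right _ _) (vert_mk.mpr hDcol.symm)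

lemma hookTL (hw : w.IsHamiltonianCycle) {i : ℕ} (hin : i < n) (him : i < m)
    (hall : ∀ v : Fin n × Fin m, max (v.1 : ℕ) (v.2 : ℕ) = i → ¬IsTurnCell w v) :
    False := by
  set d : Fin n × Fin m := (⟨i, hin⟩, ⟨i, him⟩) with hd
  obtain ⟨u₁, u₂, hne, h1, h2, -⟩ := two_incident hw d
  have hdm : d ∈ s(d, u₁) := Sym2.mem_mk_left _ _
  rcases horiz_or_vert (w := w) h1 with hh | hv
  · refine propL hw i d s(d, u₁) rfl ?_ h1 hdm hh
    intro u hu1 hu2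
    refine hall u ?_
    have : (u.1 : ℕ) = i := by rw [hu1]
    have hd2 : (d.2 : ℕ) = i := rfl
    omega
  · refine propU hw i d s(d, u₁) rfl ?_ h1 hdm hv
    intro u hu1 hu2
    refine hall u ?_
    have : (u.2 : ℕ) = i := by rw [hu1]
    have hd1 : (d.1 : ℕ) = i := rfl
    omega

lemma hookTR (hw : w.IsHamiltonianCycle) {i : ℕ} (hin : i < n) (him : i < m)
    (hall : ∀ v : Fin n × Fin m, max (v.1 : ℕ) (m - 1 - (v.2 : ℕ)) = i → ¬IsTurnCell w v) :
    False := by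
  set d : Fin n × Fin m := (⟨i, hin⟩, ⟨m - 1 - i, by omega⟩) with hd
  obtain ⟨u₁, u₂, hne, h1, h2, -⟩ := two_incident hw d
  have hdm : d ∈ s(d, u₁) := Sym2.mem_mk_left _ _
  have hd1 : (d.1 : ℕ) = i := rfl
  have hd2 : (d.2 : ℕ) = m - 1 - i := rfl
  rcases horiz_or_vert (w := w) h1 with hh | hv
  · refine propR hw (m - 1 - (d.2 : ℕ)) d s(d, u₁) rfl ?_ h1 hdm hh
    intro u hu1 hu2
    refine hall u ?_
    have : (u.1 : ℕ) = i := by rw [hu1]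
    omega
  · refine propU hw i d s(d, u₁) rfl ?_ h1 hdm hv
    intro u hu1 hu2
    refine hall u ?_
    have : (u.2 : ℕ) = m - 1 - i := by rw [hu1]
    omega

lemma hookBL (hw : w.IsHamiltonianCycle) {i : ℕ} (hin : i < n) (him : i < m)
    (hall : ∀ v : Fin n × Fin m, max (n - 1 - (v.1 : ℕ)) (v.2 : ℕ) = i → ¬IsTurnCell w v) :
    False := by
  set d : Fin n × Fin m := (⟨n - 1 - i, by omega⟩, ⟨i, him⟩) with hd
  obtain ⟨u₁, u₂, hne, h1, h2, -⟩ := two_incident hw d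
  have hdm : d ∈ s(d, u₁) := Sym2.mem_mk_left _ _
  have hd1 : (d.1 : ℕ) = n - 1 - i := rfl
  have hd2 : (d.2 : ℕ) = i := rfl
  rcases horiz_or_vert (w := w) h1 with hh | hv
  · refine propL hw i d s(d, u₁) rfl ?_ h1 hdm hh
    intro u hu1 hu2
    refine hall u ?_
    have : (u.1 : ℕ) = n - 1 - i := by rw [hu1]
    omega
  · refine propD hw (n - 1 - (d.1 : ℕ)) d s(d, u₁) rfl ?_ h1 hdm hv
    intro u hu1 hu2
    refine hall u ?_
    have : (u.2 : ℕ) = i := by rw [hu1]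
    omega

lemma hookBR (hw : w.IsHamiltonianCycle) {i : ℕ} (hin : i < n) (him : i < m)
    (hall : ∀ v : Fin n × Fin m,
      max (n - 1 - (v.1 : ℕ)) (m - 1 - (v.2 : ℕ)) = i → ¬IsTurnCell w v) :
    False := by
  set d : Fin n × Fin m := (⟨n - 1 - i, by omega⟩, ⟨m - 1 - i, by omega⟩) with hd
  obtain ⟨u₁, u₂, hne, h1, h2, -⟩ := two_incident hw d
  have hdm : d ∈ s(d, u₁) := Sym2.mem_mk_left _ _
  have hd1 : (d.1 : ℕ) = n - 1 - i := rfl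
  have hd2 : (d.2 : ℕ) = m - 1 - i := rfl
  rcases horiz_or_vert (w := w) h1 with hh | hv
  · refine propR hw (m - 1 - (d.2 : ℕ)) d s(d, u₁) rfl ?_ h1 hdm hh
    intro u hu1 hu2
    refine hall u ?_
    have : (u.1 : ℕ) = n - 1 - i := by rw [hu1]
    omega
  · refine propD hw (n - 1 - (d.1 : ℕ)) d s(d, u₁) rfl ?_ h1 hdm hv
    intro u hu1 hu2
    refine hall u ?_
    have : (u.2 : ℕ) = m - 1 - i := by rw [hu1]
    omega

def crossB {V : Type*} (sb : V → Bool) : Sym2 V → Bool :=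
  Sym2.lift ⟨fun x y => xor (sb x) (sb y), fun x y => Bool.xor_comm _ _⟩

lemma cross_parity {V : Type*} {G : SimpleGraph V} (sb : V → Bool) :
    ∀ {a b : V} (p : G.Walk a b),
      p.edges.countP (crossB sb) % 2 = (if xor (sb a) (sb b) then 1 else 0) := by
  intro a b p
  induction p with
  | nil => simp [crossB]
  | @cons a c b h q ih =>
    rw [SimpleGraph.Walk.edges_cons, List.countP_cons]
    have hmk : crossB sb s(a, c) = xor (sb a) (sb c) := rfl
    rw [hmk]
    cases hsa : sb a <;> cases hsc : sb c <;> cases hsb : sb b <;>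
      simp [hsa, hsc, hsb] at ih ⊢ <;> omega

lemma cross_even {V : Type*} {G : SimpleGraph V} (sb : V → Bool) {a : V}
    (p : G.Walk a a) : p.edges.countP (crossB sb) % 2 = 0 := by
  rw [cross_parity sb p]
  simp

lemma col_exists_turn (hw : w.IsHamiltonianCycle) (hodd : Odd n) (j : Fin m) :
    ∃ r : Fin n, IsTurnCell w (r, j) := by
  classical
  by_contra hno
  push_neg at hno
  have hn0 : 0 < n := hodd.pos
  by_cases hvc : ∃ (r : Fin n) (e : Sym2 (Fin n × Fin m)),
      e ∈ w.edges ∧ (r, j) ∈ e ∧ vertEdge e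
  · obtain ⟨r, e, he, hre, hve⟩ := hvc
    refine propU hw (r : ℕ) (r, j) e rfl ?_ he hre hve
    intro u hu1 hu2
    have : u = (u.1, j) := Prod.ext rfl hu1
    rw [this]
    exact hno u.1
  · push_neg at hvc
    have hstep : ∀ r : Fin n, ∃ uR : Fin n × Fin m,
        s((r, j), uR) ∈ w.edges ∧ uR.1 = r ∧ (j : ℕ) + 1 = (uR.2 : ℕ) := by
      intro r
      obtain ⟨u₁, u₂, hne, h1, h2, -⟩ := two_incident hw (r, j)
      have hh : horizEdge s((r, j), u₁) := by
        rcases horiz_or_vert (w := w) h1 with h | h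
        · exact h
        · exact absurd h (hvc r _ h1 (Sym2.mem_mk_left _ _))
      obtain ⟨uL, uR, hLmem, hRmem, hLrow, hRrow, hLcol, hRcol⟩ :=
        stepH hw (hno r) h1 (Sym2.mem_mk_left _ _) hh
      exact ⟨uR, hRmem, hRrow, hRcol⟩
    have hjm : (j : ℕ) + 1 < m := by
      obtain ⟨uR, -, -, hcol⟩ := hstep ⟨0, hn0⟩
      have := uR.2.isLt
      omega
    set sb : Fin n × Fin m → Bool := fun v => decide ((v.2 : ℕ) ≤ (j : ℕ)) with hsb
    set F : Fin n → Sym2 (Fin n × Fin m) :=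
      fun r => s((r, j), (r, ⟨(j : ℕ) + 1, hjm⟩)) with hF
    have hFmem : ∀ r, F r ∈ w.edges := by
      intro r
      obtain ⟨uR, hmem, hrow, hcol⟩ := hstep r
      have h2 : uR.2 = (⟨(j : ℕ) + 1, hjm⟩ : Fin m) :=
        Fin.ext (show (uR.2 : ℕ) = (j : ℕ) + 1 by omega)
      have huR : uR = (r, (⟨(j : ℕ) + 1, hjm⟩ : Fin m)) := Prod.ext hrow h2
      show s((r, j), (r, (⟨(j : ℕ) + 1, hjm⟩ : Fin m))) ∈ w.edges
      rw [← huR]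
      exact hmem
    have hFinj : Function.Injective F := by
      intro r r' hrr
      rw [hF, Sym2.eq_iff] at hrr
      rcases hrr with ⟨h1, -⟩ | ⟨h1, h2⟩
      · exact congrArg Prod.fst h1
      · exfalso
        have := congrArg (fun p : Fin n × Fin m => (p.2 : ℕ)) h1
        simp at this
    have hfwd : ∀ e : Sym2 (Fin n × Fin m), e ∈ w.edges → crossB sb e = true →
        ∃ r, F r = e := by
      intro e
      induction e using Sym2.ind with
      | _ a b =>
        intro he hcross
        have hadj := (gridGraph n m).mem_edgeSet.mp (w.edges_subset_edgeSet he)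
        have hcross' : xor (decide ((a.2 : ℕ) ≤ (j : ℕ)))
            (decide ((b.2 : ℕ) ≤ (j : ℕ))) = true := hcross
        have hxor : ¬(((a.2 : ℕ) ≤ (j : ℕ)) ↔ ((b.2 : ℕ) ≤ (j : ℕ))) := by
          intro hiff
          rcases em ((a.2 : ℕ) ≤ (j : ℕ)) with hA | hA
          · have hB := hiff.mp hA
            simp [hA, hB] at hcross'
          · have hB : ¬((b.2 : ℕ) ≤ (j : ℕ)) := fun h => hA (hiff.mpr h)
            simp [hA, hB] at hcross'
        rcases grid_adj hadj with ⟨hrow, hc⟩ | ⟨hcol, -⟩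
        · rcases hc with h | h
          · refine ⟨a.1, ?_⟩
            have haa : a = (a.1, j) :=
              Prod.ext rfl (Fin.ext (show (a.2 : ℕ) = (j : ℕ) by omega))
            have hbb : b = (a.1, (⟨(j : ℕ) + 1, hjm⟩ : Fin m)) :=
              Prod.ext hrow.symm (Fin.ext (show (b.2 : ℕ) = (j : ℕ) + 1 by omega))
            show s((a.1, j), (a.1, (⟨(j : ℕ) + 1, hjm⟩ : Fin m))) = s(a, b)
            rw [Sym2.eq_iff]
            exact Or.inl ⟨haa.symm, hbb.symm⟩
          · refine ⟨b.1, ?_⟩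
            have hbb : b = (b.1, j) :=
              Prod.ext rfl (Fin.ext (show (b.2 : ℕ) = (j : ℕ) by omega))
            have haa : a = (b.1, (⟨(j : ℕ) + 1, hjm⟩ : Fin m)) :=
              Prod.ext hrow (Fin.ext (show (a.2 : ℕ) = (j : ℕ) + 1 by omega))
            show s((b.1, j), (b.1, (⟨(j : ℕ) + 1, hjm⟩ : Fin m))) = s(a, b)
            rw [Sym2.eq_iff]
            exact Or.inr ⟨hbb.symm, haa.symm⟩
        · exfalso
          rw [hcol] at hxor
          exact hxor Iff.rfl
    have hfilter : w.edges.toFinset.filter (fun e => crossB sb e = true) =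
        Finset.image F Finset.univ := by
      ext e
      simp only [Finset.mem_filter, List.mem_toFinset, Finset.mem_image,
        Finset.mem_univ, true_and]
      constructor
      · rintro ⟨he, hcross⟩
        exact hfwd e he hcross
      · rintro ⟨r, rfl⟩
        refine ⟨hFmem r, ?_⟩
        have : crossB sb (F r) =
            xor (decide ((j : ℕ) ≤ (j : ℕ))) (decide ((j : ℕ) + 1 ≤ (j : ℕ))) := rfl
        rw [this]
        simp
    have hcount : w.edges.countP (crossB sb) = n := by
      rw [List.countP_eq_length_filter]
      have hnd : (w.edges.filter (crossB sb)).Nodup :=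
        (hw.isCycle.edges_nodup).filter _
      rw [← List.toFinset_card_of_nodup hnd, List.toFinset_filter, hfilter,
        Finset.card_image_of_injective _ hFinj, Finset.card_univ, Fintype.card_fin]
    have heven := cross_even sb w
    rw [hcount] at heven
    obtain ⟨t, ht⟩ := hodd
    omega

lemma even_sum' {ι : Type*} {s : Finset ι} {f : ι → ℕ} (h : ∀ i ∈ s, Even (f i)) :
    Even (∑ i ∈ s, f i) := by
  induction s using Finset.cons_induction with
  | empty => simp
  | cons a s ha ih =>
    rw [Finset.sum_cons]
    exact (h a (Finset.mem_cons_self a s)).add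
      (ih fun i hi => h i (Finset.mem_cons.mpr (Or.inr hi)))

open scoped Classical in
lemma col_even (hw : w.IsHamiltonianCycle) (j : Fin m) :
    Even ((Finset.univ.filter fun r : Fin n => IsTurnCell w (r, j)).card) := by
  classical
  set E := w.edges.toFinset with hE
  have hmemE : ∀ e, e ∈ E ↔ e ∈ w.edges := fun e => List.mem_toFinset
  set vdeg : Fin n × Fin m → ℕ :=
    fun v => (E.filter fun e => v ∈ e ∧ vertEdge e).card with hvdeg
  -- the total vertical degree of a column is even
  have hsum : Even (∑ r : Fin n, vdeg (r, j)) := by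
    have h1 : ∀ r : Fin n, vdeg (r, j) =
        ∑ e ∈ E, if (r, j) ∈ e ∧ vertEdge e then 1 else 0 :=
      fun r => Finset.card_filter _ _
    rw [Finset.sum_congr rfl fun r _ => h1 r, Finset.sum_comm]
    refine even_sum' ?_
    intro e he
    have heW : e ∈ w.edges := (hmemE e).mp he
    rw [← Finset.card_filter]
    clear he
    revert heW
    induction e using Sym2.ind with
    | _ a b =>
      intro heW
      have hadj := (gridGraph n m).mem_edgeSet.mp (w.edges_subset_edgeSet heW)
      have hne := hadj.ne
      by_cases hv : vertEdge s(a, b)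
      · have hab : a.2 = b.2 := vert_mk.mp hv
        have hab1 : a.1 ≠ b.1 := fun hc => hne (Prod.ext hc hab)
        by_cases hcol : a.2 = j
        · have hset : (Finset.univ.filter
              fun r : Fin n => (r, j) ∈ s(a, b) ∧ vertEdge s(a, b)) = {a.1, b.1} := by
            ext r
            simp only [Finset.mem_filter, Finset.mem_univ, true_and, Sym2.mem_iff,
              Finset.mem_insert, Finset.mem_singleton, hv, and_true]
            constructor
            · rintro (h | h)
              · exact Or.inl (congrArg Prod.fst h)
              · exact Or.inr (congrArg Prod.fst h)
            · rintro (rfl | rfl)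
              · exact Or.inl (Prod.ext rfl hcol.symm)
              · exact Or.inr (Prod.ext rfl (hab.symm.trans hcol).symm)
          rw [hset, Finset.card_pair hab1]
          exact even_two
        · have hset : (Finset.univ.filter
              fun r : Fin n => (r, j) ∈ s(a, b) ∧ vertEdge s(a, b)) = ∅ := by
            ext r
            simp only [Finset.mem_filter, Finset.mem_univ, true_and, Sym2.mem_iff,
              Finset.notMem_empty, iff_false, not_and, hv, and_true]
            rintro (h | h)
            · exact hcol (congrArg Prod.snd h).symm
            · exact hcol (hab.trans (congrArg Prod.snd h).symm)
            -- note: this `rintro` consumes the goal `¬ ...`? adjust below if needed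
          rw [hset]
          simp
      · have hset : (Finset.univ.filter
            fun r : Fin n => (r, j) ∈ s(a, b) ∧ vertEdge s(a, b)) = ∅ := by
          ext r
          simp [hv]
        rw [hset]
        simp
  -- vertical degree of a turn cell is 1
  have hturn1 : ∀ v : Fin n × Fin m, IsTurnCell w v → vdeg v = 1 := by
    intro v ht
    obtain ⟨⟨eh, heh, hveh, hhh⟩, ⟨ev, hev, hvev, hvv⟩⟩ := ht
    obtain ⟨u₁, u₂, hne12, h1, h2, hcompl⟩ := two_incident hw v
    have hhv : eh ≠ ev := fun hc => not_both heh hhh (hc ▸ hvv)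
    have hC : ∀ e', e' ∈ w.edges → v ∈ e' → vertEdge e' → e' = ev := by
      intro e' he' hve' hv'
      have h'h : e' ≠ eh := fun hc => not_both heh hhh (hc ▸ hv')
      rcases hcompl eh heh hveh with hA | hA <;>
        rcases hcompl ev hev hvev with hB | hB <;>
          rcases hcompl e' he' hve' with hC' | hC' <;>
            first
              | exact hC'.trans hB.symm
              | exact absurd (hC'.trans hA.symm) h'h
              | exact absurd (hA.trans hB.symm) hhv
    have hset : (E.filter fun e => v ∈ e ∧ vertEdge e) = {ev} := by
      ext e'
      simp only [Finset.mem_filter, hmemE, Finset.mem_singleton]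
      constructor
      · rintro ⟨he', hv', hvert⟩
        exact hC e' he' hv' hvert
      · rintro rfl
        exact ⟨hev, hvev, hvv⟩
    rw [hvdeg]
    simp only []
    rw [hset, Finset.card_singleton]
  -- vertical degree of a non-turn cell is even
  have hnt2 : ∀ v : Fin n × Fin m, ¬IsTurnCell w v → Even (vdeg v) := by
    intro v hnt
    rcases not_and_or.mp hnt with hA | hB
    · -- no incident horizontal edge: all incident edges vertical, there are two
      obtain ⟨u₁, u₂, hne12, h1, h2, hcompl⟩ := two_incident hw v
      have hvert : ∀ e, e ∈ w.edges → v ∈ e → vertEdge e := by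
        intro e he hv
        rcases horiz_or_vert (w := w) he with h | h
        · exact absurd ⟨e, he, hv, h⟩ hA
        · exact h
      have hset : (E.filter fun e => v ∈ e ∧ vertEdge e) = {s(v, u₁), s(v, u₂)} := by
        ext e'
        simp only [Finset.mem_filter, hmemE, Finset.mem_insert, Finset.mem_singleton]
        constructor
        · rintro ⟨he', hv', -⟩
          exact hcompl e' he' hv'
        · rintro (rfl | rfl)
          · exact ⟨h1, Sym2.mem_mk_left _ _, hvert _ h1 (Sym2.mem_mk_left _ _)⟩
          · exact ⟨h2, Sym2.mem_mk_left _ _, hvert _ h2 (Sym2.mem_mk_left _ _)⟩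
      have hnee : s(v, u₁) ≠ s(v, u₂) := by
        intro hc
        rw [Sym2.eq_iff] at hc
        rcases hc with ⟨-, h⟩ | ⟨h, h'⟩
        · exact hne12 h
        · exact hne12 (h'.trans h)
      rw [hvdeg]
      simp only []
      rw [hset, Finset.card_pair hnee]
      exact even_two
    · have hset : (E.filter fun e => v ∈ e ∧ vertEdge e) = ∅ := by
        ext e'
        simp only [Finset.mem_filter, hmemE, Finset.notMem_empty, iff_false, not_and]
        intro he' hv' hvert
        exact hB ⟨e', he', hv', hvert⟩
      rw [hvdeg]
      simp only []
      rw [hset]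
      simp
  -- combine
  rw [← Finset.sum_filter_add_sum_filter_not Finset.univ
    (fun r : Fin n => IsTurnCell w (r, j)) (fun r => vdeg (r, j))] at hsum
  have h1 : ∑ r ∈ Finset.univ.filter (fun r : Fin n => IsTurnCell w (r, j)),
      vdeg (r, j) = (Finset.univ.filter fun r : Fin n => IsTurnCell w (r, j)).card := by
    rw [Finset.sum_congr rfl fun r hr => hturn1 _ ((Finset.mem_filter.mp hr).2)]
    simp
  have h2 : Even (∑ r ∈ Finset.univ.filter (fun r : Fin n => ¬IsTurnCell w (r, j)),
      vdeg (r, j)) :=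
    even_sum' fun r hr => hnt2 _ ((Finset.mem_filter.mp hr).2)
  rw [h1] at hsum
  exact (Nat.even_add.mp hsum).mpr h2


end RookAux

set_option maxHeartbeats 1600000 in
/-- Let `n < m` with `n·m` even.  Every rook circuit on an `n × m` chessboard
has at least `2n` turn-cells if `n` is even, and at least `2m` turn-cells if
`n` is odd. -/
theorem min_turns_rectangle (n m : ℕ) (hnm : n < m) (hpar : Even (n * m))
    (v₀ : Fin n × Fin m) (w : (gridGraph n m).Walk v₀ v₀)
    (hw : w.IsHamiltonianCycle) :
    (Even n → 2 * n ≤ {v : Fin n × Fin m | IsTurnCell w v}.ncard) ∧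
    (Odd n → 2 * m ≤ {v : Fin n × Fin m | IsTurnCell w v}.ncard) := by
  classical
  have hn0 : 0 < n := by
    rcases Nat.eq_zero_or_pos n with h | h
    · subst h; exact v₀.1.elim0
    · exact h
  set T : Finset (Fin n × Fin m) := Finset.univ.filter (fun v => IsTurnCell w v) with hT
  have hncard : {v : Fin n × Fin m | IsTurnCell w v}.ncard = T.card := by
    rw [show {v : Fin n × Fin m | IsTurnCell w v} = (T : Set (Fin n × Fin m)) by
      ext v; simp [hT]]
    exact Set.ncard_coe_finset _
  rw [hncard]
  constructor
  · -- even case : four corners, k hooks each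
    intro hev
    obtain ⟨k, hk⟩ := hev
    have hk0 : 0 < k := by omega
    have hquad : ∀ q : Fin 4, ∀ i : Fin k, ∃ v : Fin n × Fin m, IsTurnCell w v ∧
        max (if (q : ℕ) < 2 then (v.1 : ℕ) else n - 1 - (v.1 : ℕ))
          (if (q : ℕ) % 2 = 0 then (v.2 : ℕ) else m - 1 - (v.2 : ℕ)) = (i : ℕ) := by
      intro q i
      have hik := i.isLt
      have hin : (i : ℕ) < n := by omega
      have him : (i : ℕ) < m := by omega
      by_contra hcon
      push_neg at hcon
      have hall : ∀ v : Fin n × Fin m,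
          max (if (q : ℕ) < 2 then (v.1 : ℕ) else n - 1 - (v.1 : ℕ))
            (if (q : ℕ) % 2 = 0 then (v.2 : ℕ) else m - 1 - (v.2 : ℕ)) = (i : ℕ) →
          ¬IsTurnCell w v := fun v hv ht => hcon v ht hv
      fin_cases q <;> norm_num at hall
      · exact RookAux.hookTL hw hin him (fun v => hall v.1 v.2)
      · exact RookAux.hookTR hw hin him (fun v => hall v.1 v.2)
      · exact RookAux.hookBL hw hin him (fun v => hall v.1 v.2)
      · exact RookAux.hookBR hw hin him (fun v => hall v.1 v.2)
    choose f hturn hcoord using hquad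
    have key : ∀ (q : Fin 4) (i : Fin k),
        (((f q i).1 : ℕ) < k ↔ (q : ℕ) < 2) ∧
        (((f q i).2 : ℕ) < k ↔ (q : ℕ) % 2 = 0) := by
      intro q i
      have hc := hcoord q i
      have h1 : (if (q : ℕ) < 2 then ((f q i).1 : ℕ) else n - 1 - ((f q i).1 : ℕ))
          ≤ (i : ℕ) := by rw [← hc]; exact le_max_left _ _
      have h2 : (if (q : ℕ) % 2 = 0 then ((f q i).2 : ℕ) else m - 1 - ((f q i).2 : ℕ))
          ≤ (i : ℕ) := by rw [← hc]; exact le_max_right _ _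
      have hik := i.isLt
      have hv1 := (f q i).1.isLt
      have hv2 := (f q i).2.isLt
      constructor
      · by_cases hq : (q : ℕ) < 2
        · rw [if_pos hq] at h1; omega
        · rw [if_neg hq] at h1; omega
      · by_cases hq : (q : ℕ) % 2 = 0
        · rw [if_pos hq] at h2; omega
        · rw [if_neg hq] at h2; omega
    have hinj : Function.Injective (fun p : Fin 4 × Fin k => f p.1 p.2) := by
      rintro ⟨q, i⟩ ⟨q', i'⟩ h
      simp only [] at h
      obtain ⟨k11, k12⟩ := key q i
      obtain ⟨k21, k22⟩ := key q' i'
      rw [h] at k11 k12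
      have hq : q = q' := by
        have hq4 := q.isLt
        have hq4' := q'.isLt
        exact Fin.ext (by omega)
      subst hq
      have hc1 := hcoord q i
      have hc2 := hcoord q i'
      rw [h] at hc1
      have hii : (i : ℕ) = (i' : ℕ) := hc1.symm.trans hc2
      exact Prod.ext rfl (Fin.ext hii)
    have hsub : Finset.image (fun p : Fin 4 × Fin k => f p.1 p.2) Finset.univ ⊆ T := by
      intro v hv
      obtain ⟨p, -, rfl⟩ := Finset.mem_image.mp hv
      exact Finset.mem_filter.mpr ⟨Finset.mem_univ _, hturn p.1 p.2⟩
    have hcard := Finset.card_le_card hsub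
    rw [Finset.card_image_of_injective _ hinj, Finset.card_univ, Fintype.card_prod,
      Fintype.card_fin, Fintype.card_fin] at hcard
    omega
  · -- odd case : every column contains at least two turn cells
    intro hodd
    have fib : T.card = ∑ j : Fin m, (T.filter fun v => v.2 = j).card :=
      Finset.card_eq_sum_card_fiberwise (fun x _ => Finset.mem_univ x.2)
    have hfiber : ∀ j : Fin m, 2 ≤ (T.filter fun v => v.2 = j).card := by
      intro j
      have himg : T.filter (fun v => v.2 = j) =
          Finset.image (fun r : Fin n => (r, j))
            (Finset.univ.filter fun r : Fin n => IsTurnCell w (r, j)) := by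
        ext v
        simp only [Finset.mem_filter, Finset.mem_image, Finset.mem_univ, true_and, hT]
        constructor
        · rintro ⟨ht, hv2⟩
          refine ⟨v.1, ?_, Prod.ext rfl hv2.symm⟩
          rw [show ((v.1, j) : Fin n × Fin m) = v from Prod.ext rfl hv2.symm]
          exact ht
        · rintro ⟨r, hr, rfl⟩
          exact ⟨hr, rfl⟩
      rw [himg, Finset.card_image_of_injective _
        (fun r r' h => (Prod.ext_iff.mp h).1)]
      have hne : (Finset.univ.filter fun r : Fin n => IsTurnCell w (r, j)).Nonempty := by
        obtain ⟨r, hr⟩ := RookAux.col_exists_turn hw hodd j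
        exact ⟨r, Finset.mem_filter.mpr ⟨Finset.mem_univ _, hr⟩⟩
      have heven := RookAux.col_even hw j
      have hpos := Finset.card_pos.mpr hne
      obtain ⟨t, ht⟩ := heven
      omega
    calc 2 * m = ∑ _j : Fin m, 2 := by
          simp [Finset.sum_const, Finset.card_univ, mul_comm]
      _ ≤ ∑ j : Fin m, (T.filter fun v => v.2 = j).card :=
          Finset.sum_le_sum fun j _ => hfiber j
      _ = T.card := fib.symm
end
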